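/- Let p be a prime with p ≡ 5 (mod 6) and p > 11. Then the graph G_p has exactly (p−5)p²/6 vertices and at least (p−5)(p−11)p²/72 edges. -/

import Mathlib

/-!
Every vertex `x` has a neighbour with any prescribed first coordinate `b ∈ S`, `b ≠ x₁`:
the adjacency equations are linear in `(y₂, y₃)` and force `y = (b, x₁² b - x₃, x₁ b² - x₂)`.
Hence every degree is at least `m - 1`, where `m = |S| = (p - 5)/6`, and the handshake lemma gives
`2|E| ≥ |V|(m - 1) = m(m - 1)p²`. Since `(p - 5)(p - 11) = 36 m (m - 1)`, this is the bound.
-/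

open SimpleGraph

/-- The set `S ⊆ 𝔽_p` of residues of the integers `1, …, (p-5)/6`. -/
def Sset (p : ℕ) : Finset (ZMod p) :=
  (Finset.Icc 1 ((p - 5) / 6)).image (fun k : ℕ => (k : ZMod p))

/-- The vertex set `V = S × 𝔽_p × 𝔽_p`. -/
abbrev Vert (p : ℕ) : Type := {v : ZMod p × ZMod p × ZMod p // v.1 ∈ Sset p}

/-- The graph `G_p`: distinct vertices `x = (x₁,x₂,x₃)` and `y = (y₁,y₂,y₃)` are adjacent
iff `x₂ + y₃ = x₁y₁²` and `x₃ + y₂ = x₁²y₁`. -/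
def Gp (p : ℕ) : SimpleGraph (Vert p) where
  Adj x y := x ≠ y ∧
    x.val.2.1 + y.val.2.2 = x.val.1 * y.val.1 ^ 2 ∧
    x.val.2.2 + y.val.2.1 = x.val.1 ^ 2 * y.val.1
  symm := ⟨by
    rintro x y ⟨hne, h1, h2⟩
    exact ⟨hne.symm, by linear_combination h2, by linear_combination h1⟩⟩
  loopless := ⟨fun x h => h.1 rfl⟩

instance (p : ℕ) : DecidableRel (Gp p).Adj := fun x y =>
  decidable_of_iff (x ≠ y ∧
    x.val.2.1 + y.val.2.2 = x.val.1 * y.val.1 ^ 2 ∧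
    x.val.2.2 + y.val.2.1 = x.val.1 ^ 2 * y.val.1) Iff.rfl

open Finset

theorem SimpleGraph.card_mul_le_two_mul_card_edgeFinset {V : Type*} [Fintype V] [DecidableEq V]
    (G : SimpleGraph V) [DecidableRel G.Adj] {d : ℕ} (hd : ∀ v, d ≤ G.degree v) :
    Fintype.card V * d ≤ 2 * #G.edgeFinset := by
  rw [← sum_degrees_eq_twice_card_edges, ← smul_eq_mul, ← card_univ]
  exact card_nsmul_le_sum _ _ _ fun v _ => hd v

section

variable (p : ℕ) [NeZero p]

theorem card_Sset : #(Sset p) = (p - 5) / 6 := by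
  rw [Sset, card_image_of_injOn, Nat.card_Icc, Nat.add_sub_cancel]
  refine (CharP.natCast_injOn_Iio (ZMod p) p).mono fun k hk => ?_
  have hp : 0 < p := Nat.pos_of_neZero p
  simp only [coe_Icc, Set.mem_Icc] at hk
  exact Set.mem_Iio.2 (by omega)

theorem card_Vert : Fintype.card (Vert p) = (p - 5) / 6 * p ^ 2 := by
  rw [Fintype.card_congr Equiv.prodSubtypeFstEquivSubtypeProd, Fintype.card_prod,
    Fintype.card_prod, Fintype.card_coe, card_Sset, ZMod.card, sq]

theorem card_Sset_sub_one_le_degree (x : Vert p) : #(Sset p) - 1 ≤ (Gp p).degree x := by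
  obtain ⟨⟨a, u, w⟩, ha⟩ := x
  rw [← card_erase_of_mem ha, ← card_neighborFinset_eq_degree]
  refine card_le_card_of_surjOn (fun y : Vert p => y.val.1) fun b hb => ?_
  obtain ⟨hba, hb⟩ := mem_erase.1 hb
  refine ⟨⟨(b, a ^ 2 * b - w, a * b ^ 2 - u), hb⟩, ?_, rfl⟩
  rw [mem_coe, mem_neighborFinset]
  exact ⟨fun h => hba (congrArg (fun y : Vert p => y.val.1) h).symm, by ring, by ring⟩

end

theorem sub_five_mul_sub_eleven_of_mod_six {p : ℕ} (h5 : p % 6 = 5) :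
    (p - 5) * (p - 11) = 36 * ((p - 5) / 6 * ((p - 5) / 6 - 1)) := by
  rw [show p - 5 = 6 * ((p - 5) / 6) by omega, show p - 11 = 6 * ((p - 5) / 6 - 1) by omega,
    Nat.mul_div_cancel_left _ (by norm_num)]
  ring

theorem Gp_card_edges_general (p : ℕ) [Fact p.Prime] (h5 : p % 6 = 5) :
    Fintype.card (Vert p) = (p - 5) * p ^ 2 / 6 ∧
    (p - 5) * (p - 11) * p ^ 2 / 72 ≤ (Gp p).edgeFinset.card := by
  refine ⟨(card_Vert p).trans (Nat.div_mul_right_comm (by omega) _), ?_⟩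
  have hdeg := (Gp p).card_mul_le_two_mul_card_edgeFinset (card_Sset_sub_one_le_degree p)
  rw [card_Vert, card_Sset] at hdeg
  refine Nat.div_le_of_le_mul ?_
  rw [sub_five_mul_sub_eleven_of_mod_six h5]
  linarith

/-- `G_p` has exactly `(p-5)p²/6` vertices and at least `(p-5)(p-11)p²/72` edges. -/
theorem Gp_card_edges (p : ℕ) [Fact p.Prime] (h5 : p % 6 = 5) (h11 : 11 < p) :
    Fintype.card (Vert p) = (p - 5) * p ^ 2 / 6 ∧
    (p - 5) * (p - 11) * p ^ 2 / 72 ≤ (Gp p).edgeFinset.card :=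
  Gp_card_edges_general p h5
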